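/- Let k be a positive integer. If X is an S(k)-space, then |X| ≤ 2^{s_{2k}(X)·ψ_{2k}(X)}. -/

import Mathlib

open Cardinal Set

universe u

variable {X : Type u}

/-- `x` is S(n)-separated from `A`. -/
def SSep [TopologicalSpace X] : ℕ → X → Set X → Prop
  | 0, x, A => x ∉ closure A
  | (n+1), x, A => ∃ U : ℕ → Set X, (∀ i ≤ n, IsOpen (U i)) ∧ x ∈ U 0 ∧
      (∀ i < n, closure (U i) ⊆ U (i+1)) ∧ closure (U n) ∩ A = ∅

/-- `X` is an S(n)-space. -/
def SSpace (n : ℕ) (X : Type u) [TopologicalSpace X] : Prop :=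
  ∀ x y : X, x ≠ y → SSep n x {y}

/-- `U` is an S(2k-1)-neighborhood of `x` (for `k ≥ 1`). -/
def SOddNhd [TopologicalSpace X] (k : ℕ) (x : X) (U : Set X) : Prop :=
  ∃ V : ℕ → Set X, (∀ i < k, IsOpen (V i)) ∧ x ∈ V 0 ∧
    (∀ i, i + 1 < k → closure (V i) ⊆ V (i+1)) ∧ V (k-1) ⊆ U

/-- `U` is an S(2k)-neighborhood of `x` (for `k ≥ 1`). -/
def SEvenNhd [TopologicalSpace X] (k : ℕ) (x : X) (U : Set X) : Prop :=
  ∃ V : ℕ → Set X, (∀ i < k, IsOpen (V i)) ∧ x ∈ V 0 ∧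
    (∀ i, i + 1 < k → closure (V i) ⊆ V (i+1)) ∧ closure (V (k-1)) ⊆ U

/-- `U` is an open S(2k-1)-neighborhood of `x`. -/
def SOpenNhd [TopologicalSpace X] (k : ℕ) (x : X) (U : Set X) : Prop :=
  IsOpen U ∧ SOddNhd k x U

/-- `U` is an S(2k-1)-open set. -/
def SOpen [TopologicalSpace X] (k : ℕ) (U : Set X) : Prop :=
  IsOpen U ∧ ∃ x, SOddNhd k x U

/-- The S(2k-1)-closure `θ_{2k-1}(A)`. -/
def thetaOdd [TopologicalSpace X] (k : ℕ) (A : Set X) : Set X :=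
  {x | ∀ U : Set X, SOpenNhd k x U → (U ∩ A).Nonempty}

/-- The S(2k)-closure `θ_{2k}(A)`. -/
def thetaEven [TopologicalSpace X] (k : ℕ) (A : Set X) : Set X :=
  {x | ∀ U : Set X, SOpenNhd k x U → (closure U ∩ A).Nonempty}

/-- `D` is S(2k-1)-discrete. -/
def SOddDiscrete [TopologicalSpace X] (k : ℕ) (D : Set X) : Prop :=
  ∀ x ∈ D, ∃ U : Set X, SOpenNhd k x U ∧ U ∩ D = {x}

/-- `D` is S(2k)-discrete. -/
def SEvenDiscrete [TopologicalSpace X] (k : ℕ) (D : Set X) : Prop :=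
  ∀ x ∈ D, ∃ U : Set X, SOpenNhd k x U ∧ closure U ∩ D = {x}

/-- The S(2k-1)-spread `s_{2k-1}(X)`. -/
noncomputable def spreadOdd (k : ℕ) (X : Type u) [TopologicalSpace X] : Cardinal :=
  (⨆ D : {D : Set X // SOddDiscrete k D}, #D.1) ⊔ Cardinal.aleph0

/-- The S(2k)-spread `s_{2k}(X)`. -/
noncomputable def spreadEven (k : ℕ) (X : Type u) [TopologicalSpace X] : Cardinal :=
  (⨆ D : {D : Set X // SEvenDiscrete k D}, #D.1) ⊔ Cardinal.aleph0

/-- The S(2k-1)-cellularity `c_{2k-1}(X)`. -/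
noncomputable def cellOdd (k : ℕ) (X : Type u) [TopologicalSpace X] : Cardinal :=
  (⨆ F : {F : Set (Set X) // (∀ U ∈ F, SOpen k U ∧ U.Nonempty) ∧
      (∀ U ∈ F, ∀ V ∈ F, U ≠ V → U ∩ V = ∅)}, #F.1) ⊔ Cardinal.aleph0

/-- The S(2k)-cellularity `c_{2k}(X)`. -/
noncomputable def cellEven (k : ℕ) (X : Type u) [TopologicalSpace X] : Cardinal :=
  (⨆ F : {F : Set (Set X) // (∀ U ∈ F, SOpen k U ∧ U.Nonempty) ∧
      (∀ U ∈ F, ∀ V ∈ F, U ≠ V → closure U ∩ closure V = ∅)}, #F.1) ⊔ Cardinal.aleph0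

/-- The S(2k-1)-character `χ_{2k-1}(X)`. -/
noncomputable def charOdd (k : ℕ) (X : Type u) [TopologicalSpace X] : Cardinal :=
  sInf {c | Cardinal.aleph0 ≤ c ∧ ∀ x : X, ∃ B : Set (Set X), #B ≤ c ∧
    (∀ U ∈ B, SOpenNhd k x U) ∧
    ∀ U : Set X, SOpenNhd k x U → ∃ V ∈ B, V ⊆ U}

/-- The S(2k)-character `χ_{2k}(X)`. -/
noncomputable def charEven (k : ℕ) (X : Type u) [TopologicalSpace X] : Cardinal :=
  sInf {c | Cardinal.aleph0 ≤ c ∧ ∀ x : X, ∃ B : Set (Set X), #B ≤ c ∧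
    (∀ V ∈ B, IsClosed V ∧ SOddNhd k x V) ∧
    ∀ W : Set X, SOpenNhd k x W → ∃ V ∈ B, V ⊆ closure W}

/-- The S(2k-1)-pseudocharacter `ψ_{2k-1}(X)`. -/
noncomputable def psiOdd (k : ℕ) (X : Type u) [TopologicalSpace X] : Cardinal :=
  sInf {c | Cardinal.aleph0 ≤ c ∧ ∀ x : X, ∃ B : Set (Set X), #B ≤ c ∧
    (∀ U ∈ B, SOpenNhd k x U) ∧ ⋂₀ B = {x}}

/-- The S(2k)-pseudocharacter `ψ_{2k}(X)`. -/
noncomputable def psiEven (k : ℕ) (X : Type u) [TopologicalSpace X] : Cardinal :=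
  sInf {c | Cardinal.aleph0 ≤ c ∧ ∀ x : X, ∃ B : Set (Set X), #B ≤ c ∧
    (∀ U ∈ B, SOpenNhd k x U) ∧ (⋂ U ∈ B, closure U) = {x}}

/-- The usual pseudocharacter `ψ(X)`. -/
noncomputable def psi (X : Type u) [TopologicalSpace X] : Cardinal :=
  sInf {c | Cardinal.aleph0 ≤ c ∧ ∀ x : X, ∃ B : Set (Set X), #B ≤ c ∧
    (∀ U ∈ B, IsOpen U) ∧ ⋂₀ B = {x}}

/-!
Hajnal–Juhász argument. Let `κ = s_{2k}(X) · ψ_{2k}(X)` and fix for every point `x` open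
S(2k-1)-neighbourhoods `V x t`, `t < κ`, whose closures meet in `{x}`. Colour a pair `x ≠ y` by a
pair of indices `(t₁, t₂)` with `y ∉ cl (V x t₁)` and `x ∉ cl (V y t₂)`. If `|X| > 2 ^ κ`, the
Erdős–Rado theorem `(2^κ)⁺ → (κ⁺)²_κ` yields `H` of size `κ⁺` on which a single colour occurs, in
one orientation or the other, on every pair; then `cl (V x t₁ ∩ V x t₂)` meets `H` only in `x`, so
`H` is S(2k)-discrete, against `|H| > s_{2k}(X)`.

Erdős–Rado follows by ramification: for each `a` build a sequence of length `κ⁺` in which every term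
has, towards each earlier term, the same colour as `a` has. If for some `a` the sequence avoids
`a`, the pigeonhole principle on these colours gives the homogeneous set. Otherwise each `a` is
determined by a position where it occurs together with its colours against the earlier terms,
whence `|A| ≤ κ⁺ · κ^κ = 2^κ`.
-/

section ErdosRado

open Function Order

theorem mk_sigma_Iio_le {C W : Type u} [Preorder W] {κ : Cardinal.{u}} (hκ : ℵ₀ ≤ κ)
    (hC : #C ≤ κ) (hW : #W ≤ 2 ^ κ) (hIio : ∀ ρ : W, #(Iio ρ) ≤ κ) :
    #(Σ ρ : W, Iio ρ → C) ≤ 2 ^ κ := by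
  have hκ0 : κ ≠ 0 := (aleph0_pos.trans_le hκ).ne'
  calc #(Σ ρ : W, Iio ρ → C) = Cardinal.sum fun ρ : W => #C ^ #(Iio ρ : Set W) := by
        simp only [mk_sigma, power_def]
    _ ≤ Cardinal.sum fun _ : W => 2 ^ κ := sum_le_sum _ _ fun ρ => by
        rw [← power_self_eq hκ]
        exact (power_le_power_right hC).trans (power_le_power_left hκ0 (hIio ρ))
    _ = #W * 2 ^ κ := by simp
    _ ≤ 2 ^ κ * 2 ^ κ := mul_le_mul_left hW _
    _ = 2 ^ κ := mul_eq_self (hκ.trans (cantor κ).le)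

section Ramification

variable {A C W : Type u} [Nonempty A] [LinearOrder W] [WellFoundedLT W]

/-- `a` itself meets the defining condition until it occurs in the sequence, so up to that point
`Classical.epsilon` makes a genuine choice. -/
noncomputable def ramificationSeq (F : A → A → C) (a : A) : W → A :=
  WellFoundedLT.fix fun ξ s => Classical.epsilon fun y =>
    ∀ η (h : η < ξ), s η h ≠ y ∧ F (s η h) y = F (s η h) a

variable (F : A → A → C)

theorem ramificationSeq_eq (a : A) (ξ : W) :
    ramificationSeq F a ξ = Classical.epsilon fun y => ∀ η < ξ,
      ramificationSeq F a η ≠ y ∧ F (ramificationSeq F a η) y = F (ramificationSeq F a η) a :=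
  WellFoundedLT.fix_eq _ ξ

theorem ramificationSeq_spec {a : A} {ξ : W} (ha : ∀ η < ξ, ramificationSeq F a η ≠ a) :
    ∀ η < ξ, ramificationSeq F a η ≠ ramificationSeq F a ξ ∧
      F (ramificationSeq F a η) (ramificationSeq F a ξ) = F (ramificationSeq F a η) a := by
  have hex : ∃ y, ∀ η < ξ, ramificationSeq F a η ≠ y ∧
      F (ramificationSeq F a η) y = F (ramificationSeq F a η) a :=
    ⟨a, fun η hη => ⟨ha η hη, rfl⟩⟩
  rw [ramificationSeq_eq F a ξ]
  exact Classical.epsilon_spec hex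

theorem ramificationSeq_congr {a b : A} {ξ : W}
    (h : ∀ η < ξ, F (ramificationSeq F a η) a = F (ramificationSeq F b η) b) :
    ramificationSeq F a ξ = ramificationSeq F b ξ := by
  induction ξ using WellFoundedLT.induction with
  | ind ξ ih =>
    have hprev : ∀ η < ξ, ramificationSeq F a η = ramificationSeq F b η :=
      fun η hη => ih η hη fun ζ hζ => h ζ (hζ.trans hη)
    rw [ramificationSeq_eq, ramificationSeq_eq]
    congr 1
    ext y
    refine forall₂_congr fun η hη => ?_
    rw [h η hη, hprev η hη]

theorem exists_homogeneous_of_ramificationSeq_ne {κ : Cardinal.{u}} (hκ : ℵ₀ ≤ κ)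
    (hC : #C ≤ κ) (hW : #W = succ κ) {a : A} (ha : ∀ ξ : W, ramificationSeq F a ξ ≠ a) :
    ∃ (H : Set A) (c : C), κ < #H ∧ ∀ x ∈ H, ∀ y ∈ H, x ≠ y → F x y = c ∨ F y x = c := by
  set s : W → A := ramificationSeq F a
  have hend : ∀ {η ξ : W}, η < ξ → s η ≠ s ξ ∧ F (s η) (s ξ) = F (s η) a :=
    fun {η ξ} => ramificationSeq_spec F (fun ζ _ => ha ζ) η
  have hs : Injective s := Injective.of_lt_imp_ne fun η ξ h => (hend h).1
  obtain ⟨c, hc⟩ := infinite_pigeonhole_card (fun η => F (s η) a) (succ κ) hW.ge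
    (hκ.trans (le_succ κ)) (by rw [(isRegular_succ hκ).cof_ord]; exact hC.trans_lt (lt_succ κ))
  refine ⟨s '' ((fun η => F (s η) a) ⁻¹' {c}), c, ?_, ?_⟩
  · rw [mk_image_eq hs]
    exact (lt_succ κ).trans_le hc
  · rintro _ ⟨η, hη, rfl⟩ _ ⟨ξ, hξ, rfl⟩ hne
    rcases lt_or_gt_of_ne (ne_of_apply_ne s hne) with h | h
    · exact Or.inl ((hend h).2.trans hη)
    · exact Or.inr ((hend h).2.trans hξ)

theorem mk_le_mk_sigma_of_forall_ramificationSeq_eq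
    (h : ∀ a : A, ∃ ρ : W, ramificationSeq F a ρ = a) : #A ≤ #(Σ ρ : W, Iio ρ → C) := by
  choose ρ hρ using h
  refine mk_le_of_injective (f := fun a => ⟨ρ a, fun η => F (ramificationSeq F a η.1) a⟩) ?_
  intro a b hab
  have hρab : ρ a = ρ b := congrArg Sigma.fst hab
  have hcol : ∀ η < ρ a, F (ramificationSeq F a η) a = F (ramificationSeq F b η) b := by
    intro η hη
    -- decode both sides to functions `W → Option C`, avoiding `HEq` between the fibres
    have := congrFun (congrArg (fun p : Σ ρ : W, Iio ρ → C => fun η : W =>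
      if h : η < p.1 then some (p.2 ⟨η, h⟩) else none) hab) η
    simpa [hη, hρab ▸ hη] using this
  calc a = ramificationSeq F a (ρ a) := (hρ a).symm
    _ = ramificationSeq F b (ρ b) := hρab ▸ ramificationSeq_congr F hcol
    _ = b := hρ b

end Ramification

theorem erdos_rado {A C : Type u} {κ : Cardinal.{u}} (hκ : ℵ₀ ≤ κ) (hC : #C ≤ κ)
    (hA : 2 ^ κ < #A) (F : A → A → C) :
    ∃ (H : Set A) (c : C), κ < #H ∧ ∀ a ∈ H, ∀ b ∈ H, a ≠ b → F a b = c ∨ F b a = c := by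
  have : Nonempty A := mk_ne_zero_iff.mp (ne_bot_of_gt hA)
  have hW : #(succ κ).ord.ToType = succ κ := mk_ord_toType _
  by_cases hend : ∃ a, ∀ ξ : (succ κ).ord.ToType, ramificationSeq F a ξ ≠ a
  · obtain ⟨a, ha⟩ := hend
    exact exists_homogeneous_of_ramificationSeq_ne F hκ hC hW ha
  · push Not at hend
    have hIio (ρ : (succ κ).ord.ToType) : #(Iio ρ) ≤ κ := by
      have h := mk_Iio_lt ρ (by simp)
      rw [hW] at h
      exact lt_succ_iff.mp h
    have hWle : #(succ κ).ord.ToType ≤ 2 ^ κ := hW.trans_le (succ_le_of_lt (cantor κ))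
    exact absurd ((mk_le_mk_sigma_of_forall_ramificationSeq_eq F hend).trans
      (mk_sigma_Iio_le hκ hC hWle hIio)) hA.not_ge

end ErdosRado

theorem exists_range_eq_of_mk_le {α T : Type u} {B : Set α} (hB : B.Nonempty) (h : #B ≤ #T) :
    ∃ f : T → α, range f = B := by
  obtain ⟨e⟩ := h
  have : Nonempty B := hB.to_subtype
  refine ⟨Subtype.val ∘ Function.invFun e, ?_⟩
  rw [range_comp, (Function.invFun_surjective e.injective).range_eq, image_univ,
    Subtype.range_coe]

section Topology

variable [TopologicalSpace X] {k : ℕ}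

theorem SOddNhd.mem {x : X} {U : Set X} (h : SOddNhd k x U) : x ∈ U := by
  obtain ⟨V, -, hx, hV, hVU⟩ := h
  suffices ∀ i ≤ k - 1, x ∈ V i from hVU (this (k - 1) le_rfl)
  intro i hi
  induction i with
  | zero => exact hx
  | succ i ih => exact hV i (by omega) (subset_closure (ih (by omega)))

theorem SOddNhd.inter {x : X} {U U' : Set X} (h : SOddNhd k x U) (h' : SOddNhd k x U') :
    SOddNhd k x (U ∩ U') := by
  obtain ⟨V, hVo, hx, hV, hVU⟩ := h
  obtain ⟨V', hVo', hx', hV', hVU'⟩ := h'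
  refine ⟨fun i => V i ∩ V' i, fun i hi => (hVo i hi).inter (hVo' i hi), ⟨hx, hx'⟩,
    fun i hi => ?_, inter_subset_inter hVU hVU'⟩
  exact subset_inter ((closure_mono inter_subset_left).trans (hV i hi))
    ((closure_mono inter_subset_right).trans (hV' i hi))

theorem SOpenNhd.inter {x : X} {U U' : Set X} (h : SOpenNhd k x U) (h' : SOpenNhd k x U') :
    SOpenNhd k x (U ∩ U') :=
  ⟨h.1.inter h'.1, h.2.inter h'.2⟩

theorem sOpenNhd_univ (x : X) : SOpenNhd k x univ :=
  ⟨isOpen_univ, fun _ => univ, fun _ _ => isOpen_univ, mem_univ x, fun _ _ => subset_univ _,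
    subset_univ _⟩

theorem SSpace.exists_sOpenNhd_notMem_closure (hk : 1 ≤ k) (h : SSpace k X) {x y : X}
    (hxy : x ≠ y) : ∃ U, SOpenNhd k x U ∧ y ∉ closure U := by
  obtain ⟨n, rfl⟩ : ∃ n, k = n + 1 := ⟨k - 1, by omega⟩
  obtain ⟨U, hUo, hx, hU, hUy⟩ := h x y hxy
  refine ⟨U n, ⟨hUo n le_rfl, U, fun i hi => hUo i (by omega), hx,
    fun i hi => hU i (by omega), subset_rfl⟩, fun hy => ?_⟩
  have hy' : y ∈ closure (U n) ∩ {y} := ⟨hy, rfl⟩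
  rwa [hUy] at hy'

theorem SSpace.psiEven_spec (hk : 1 ≤ k) (h : SSpace k X) :
    ℵ₀ ≤ psiEven k X ∧ ∀ x : X, ∃ B : Set (Set X), #B ≤ psiEven k X ∧
      (∀ U ∈ B, SOpenNhd k x U) ∧ (⋂ U ∈ B, closure U) = {x} := by
  suffices hne : {c | ℵ₀ ≤ c ∧ ∀ x : X, ∃ B : Set (Set X), #B ≤ c ∧
      (∀ U ∈ B, SOpenNhd k x U) ∧ (⋂ U ∈ B, closure U) = {x}}.Nonempty from csInf_mem hne
  refine ⟨#X ⊔ ℵ₀, le_sup_right, fun x => ?_⟩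
  choose U hU hUy using fun y : {y // y ≠ x} =>
    h.exists_sOpenNhd_notMem_closure hk (Ne.symm y.2)
  refine ⟨range U, mk_range_le.trans ((mk_subtype_le _).trans le_sup_left),
    forall_mem_range.2 hU, ?_⟩
  rw [biInter_range, eq_singleton_iff_unique_mem]
  refine ⟨mem_iInter.2 fun y => subset_closure (hU y).2.mem, fun z hz => ?_⟩
  by_contra hzx
  exact hUy ⟨z, hzx⟩ (mem_iInter.1 hz ⟨z, hzx⟩)

theorem SSpace.exists_iInter_closure_eq_singleton (hk : 1 ≤ k) (h : SSpace k X) {T : Type u}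
    [Nonempty T] (hT : psiEven k X ≤ #T) (x : X) :
    ∃ V : T → Set X, (∀ t, SOpenNhd k x (V t)) ∧ ⋂ t, closure (V t) = {x} := by
  obtain ⟨B, hBψ, hB, hBx⟩ := (h.psiEven_spec hk).2 x
  rcases B.eq_empty_or_nonempty with rfl | hne
  · refine ⟨fun _ => univ, fun _ => sOpenNhd_univ x, ?_⟩
    simpa using hBx
  · obtain ⟨V, rfl⟩ := exists_range_eq_of_mk_le hne (hBψ.trans hT)
    exact ⟨V, forall_mem_range.1 hB, biInter_range ▸ hBx⟩

theorem sEvenDiscrete_of_notMem_closure {H : Set X} {U : X → Set X}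
    (hU : ∀ x ∈ H, SOpenNhd k x (U x)) (hsep : ∀ x ∈ H, ∀ y ∈ H, x ≠ y → y ∉ closure (U x)) :
    SEvenDiscrete k H := by
  refine fun x hx => ⟨U x, hU x hx, eq_singleton_iff_unique_mem.2 ⟨⟨?_, hx⟩, ?_⟩⟩
  · exact subset_closure (hU x hx).2.mem
  · rintro y ⟨hy, hyH⟩
    by_contra hyx
    exact hsep x hx y hyH (Ne.symm hyx) hy

theorem SEvenDiscrete.mk_le_spreadEven {D : Set X} (hD : SEvenDiscrete k D) :
    #D ≤ spreadEven k X :=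
  (le_ciSup bddAbove_of_small (⟨D, hD⟩ : {D : Set X // SEvenDiscrete k D})).trans le_sup_left

theorem SSpace.exists_sEvenDiscrete_of_two_power_lt (hk : 1 ≤ k) (h : SSpace k X)
    {κ : Cardinal.{u}} (hκ : ℵ₀ ≤ κ) (hψ : psiEven k X ≤ κ) (hX : 2 ^ κ < #X) :
    ∃ D : Set X, SEvenDiscrete k D ∧ κ < #D := by
  have hT : #κ.out = κ := mk_out κ
  have : Nonempty κ.out := mk_ne_zero_iff.mp (by rw [hT]; exact (aleph0_pos.trans_le hκ).ne')
  choose V hV hVx using h.exists_iInter_closure_eq_singleton hk (hψ.trans_eq hT.symm)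
  have hnotMem {x y : X} (hxy : x ≠ y) : ∃ t, y ∉ closure (V x t) := by
    have : y ∉ ⋂ t, closure (V x t) := by rw [hVx]; exact hxy.symm
    simpa only [mem_iInter, not_forall] using this
  have hcolor (x y : X) : ∃ c : κ.out × κ.out,
      x ≠ y → y ∉ closure (V x c.1) ∧ x ∉ closure (V y c.2) := by
    by_cases hxy : x = y
    · exact ⟨Classical.arbitrary _, absurd hxy⟩
    obtain ⟨t₁, ht₁⟩ := hnotMem hxy
    obtain ⟨t₂, ht₂⟩ := hnotMem (Ne.symm hxy)
    exact ⟨(t₁, t₂), fun _ => ⟨ht₁, ht₂⟩⟩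
  choose F hF using hcolor
  obtain ⟨H, ⟨t₁, t₂⟩, hH, hhom⟩ :=
    erdos_rado hκ (by rw [mk_prod, lift_id, hT, mul_eq_self hκ]) hX F
  refine ⟨H, sEvenDiscrete_of_notMem_closure (U := fun x => V x t₁ ∩ V x t₂)
    (fun x _ => (hV x t₁).inter (hV x t₂)) fun x hx y hy hxy hyx => ?_, hH⟩
  rcases hhom x hx y hy hxy with hc | hc
  · exact (hc ▸ hF x y hxy).1 (closure_mono inter_subset_left hyx)
  · exact (hc ▸ hF y x (Ne.symm hxy)).2 (closure_mono inter_subset_right hyx)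

end Topology

theorem stmt12 (k : ℕ) (hk : 1 ≤ k) (X : Type u) [TopologicalSpace X]
    (h : SSpace k X) :
    #X ≤ 2 ^ (spreadEven k X * psiEven k X) := by
  have hs : ℵ₀ ≤ spreadEven k X := le_sup_right
  have hψ : ℵ₀ ≤ psiEven k X := (h.psiEven_spec hk).1
  rw [mul_eq_max hs hψ]
  by_contra! hX
  obtain ⟨D, hD, hDκ⟩ :=
    h.exists_sEvenDiscrete_of_two_power_lt hk (hs.trans (le_max_left _ _)) (le_max_right _ _) hX
  exact hDκ.not_ge (hD.mk_le_spreadEven.trans (le_max_left _ _))
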